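/- Let f : (0,∞) → [0,∞) be locally integrable with ∫_0^∞ f ≤ 1 and let M : [0,1] → ℝ be continuous. Define Λ(t) = ∫_0^t f(t-s) M(s) ds. If f is nonincreasing, then for all 0 ≤ s ≤ t ≤ 1 with t - s ≤ δ: |Λ(t) - Λ(s)| ≤ 2 (∫_0^δ f(u) du) · sup_{u ≤ 1} |M(u)|. -/

import Mathlib

/-!
Split `Λ(t) - Λ(s)` into `∫_s^t f(t-u) M(u) du` and `∫_0^s (f(t-u) - f(s-u)) M(u) du`. Both are
at most `K ∫_0^{t-s} f`: the first directly, the second because `f` is nonincreasing, so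
`|f(t-u) - f(s-u)| = f(s-u) - f(t-u)`, whose integral over `[0,s]` is
`∫_0^s f - ∫_{t-s}^t f = ∫_0^{t-s} f - ∫_s^t f ≤ ∫_0^{t-s} f`.
-/

open MeasureTheory

section

open intervalIntegral Set

variable {f M : ℝ → ℝ} {s t K : ℝ}

theorem integral_nonneg_of_nonneg_on_Ioi (hf0 : ∀ x, 0 < x → 0 ≤ f x) (hs : 0 ≤ s)
    (hst : s ≤ t) : 0 ≤ ∫ u in s..t, f u := by
  rw [integral_of_le hst]
  exact setIntegral_nonneg measurableSet_Ioc fun x hx => hf0 x (hs.trans_lt hx.1)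

theorem intervalIntegrable_comp_sub_left_of_le (hf : IntervalIntegrable f volume 0 t)
    (hs : 0 ≤ s) (hst : s ≤ t) : IntervalIntegrable (fun u => f (t - u)) volume 0 s := by
  have hf' : IntervalIntegrable f volume (t - s) t := hf.mono_set
    (uIcc_subset_uIcc (mem_uIcc_of_le (sub_nonneg.2 hst) (sub_le_self t hs)) right_mem_uIcc)
  simpa using (hf'.comp_sub_left t).symm

theorem intervalIntegrable_comp_sub_left_mul (hf : IntervalIntegrable f volume 0 t)
    (ht : 0 ≤ t) (hM : ContinuousOn M (uIcc 0 t)) :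
    IntervalIntegrable (fun u => f (t - u) * M u) volume 0 t :=
  (intervalIntegrable_comp_sub_left_of_le hf ht le_rfl).mul_continuousOn hM

theorem integral_comp_sub_left_mul_sub_eq
    (ht : IntervalIntegrable (fun u => f (t - u) * M u) volume 0 t)
    (hs : IntervalIntegrable (fun u => f (s - u) * M u) volume 0 s) (hs0 : 0 ≤ s)
    (hst : s ≤ t) :
    (∫ u in (0 : ℝ)..t, f (t - u) * M u) - ∫ u in (0 : ℝ)..s, f (s - u) * M u
      = (∫ u in s..t, f (t - u) * M u) + ∫ u in (0 : ℝ)..s, (f (t - u) - f (s - u)) * M u := by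
  have hs_mem : s ∈ uIcc 0 t := mem_uIcc_of_le hs0 hst
  have h0s := ht.mono_set (uIcc_subset_uIcc left_mem_uIcc hs_mem)
  have hst' := ht.mono_set (uIcc_subset_uIcc hs_mem right_mem_uIcc)
  simp only [sub_mul]
  rw [integral_sub h0s hs, ← integral_add_adjacent_intervals h0s hst']
  ring

theorem abs_integral_comp_sub_left_mul_le (hf0 : ∀ x, 0 < x → 0 ≤ f x)
    (hf : IntervalIntegrable f volume 0 (t - s)) (hK : ∀ u ∈ Icc s t, |M u| ≤ K)
    (hst : s ≤ t) :
    |∫ u in s..t, f (t - u) * M u| ≤ (∫ u in (0 : ℝ)..(t - s), f u) * K := by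
  have hft : IntervalIntegrable (fun u => f (t - u)) volume s t := by
    simpa using (hf.comp_sub_left t).symm
  have hbound : ∀ᵐ u, u ∈ Ioc s t → ‖f (t - u) * M u‖ ≤ f (t - u) * K := by
    filter_upwards [Measure.ae_ne volume t] with u hut hu
    have hpos : 0 < t - u := sub_pos.2 (lt_of_le_of_ne hu.2 hut)
    rw [Real.norm_eq_abs, abs_mul, abs_of_nonneg (hf0 _ hpos)]
    exact mul_le_mul_of_nonneg_left (hK u (Ioc_subset_Icc_self hu)) (hf0 _ hpos)
  calc |∫ u in s..t, f (t - u) * M u| ≤ ∫ u in s..t, f (t - u) * K :=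
        norm_integral_le_of_norm_le hst hbound (hft.mul_const K)
    _ = (∫ u in (0 : ℝ)..(t - s), f u) * K := by
        rw [intervalIntegral.integral_mul_const, integral_comp_sub_left, sub_self]

theorem integral_comp_sub_left_sub_le (hf0 : ∀ x, 0 < x → 0 ≤ f x)
    (hf : IntervalIntegrable f volume 0 t) (hs : 0 ≤ s) (hst : s ≤ t) :
    ∫ u in (0 : ℝ)..s, (f (s - u) - f (t - u)) ≤ ∫ u in (0 : ℝ)..(t - s), f u := by
  have hsub : ∀ {a b}, a ∈ uIcc 0 t → b ∈ uIcc 0 t → IntervalIntegrable f volume a b :=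
    fun ha hb => hf.mono_set (uIcc_subset_uIcc ha hb)
  have hs_mem : s ∈ uIcc 0 t := mem_uIcc_of_le hs hst
  have hts_mem : t - s ∈ uIcc 0 t := mem_uIcc_of_le (sub_nonneg.2 hst) (sub_le_self t hs)
  rw [integral_sub (intervalIntegrable_comp_sub_left_of_le (hsub left_mem_uIcc hs_mem) hs le_rfl)
      (intervalIntegrable_comp_sub_left_of_le hf hs hst),
    integral_comp_sub_left, integral_comp_sub_left, sub_zero, sub_self, sub_zero,
    integral_interval_sub_interval_comm (hsub left_mem_uIcc hs_mem)
      (hsub hts_mem right_mem_uIcc) (hsub left_mem_uIcc hts_mem)]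
  linarith [integral_nonneg_of_nonneg_on_Ioi hf0 hs hst]

theorem abs_integral_comp_sub_left_sub_mul_le (hf0 : ∀ x, 0 < x → 0 ≤ f x)
    (hmono : AntitoneOn f (Ioi 0)) (hf : IntervalIntegrable f volume 0 t)
    (hK : ∀ u ∈ Icc 0 s, |M u| ≤ K) (hs : 0 ≤ s) (hst : s ≤ t) :
    |∫ u in (0 : ℝ)..s, (f (t - u) - f (s - u)) * M u|
      ≤ (∫ u in (0 : ℝ)..(t - s), f u) * K := by
  have hK0 : 0 ≤ K := (abs_nonneg _).trans (hK 0 (left_mem_Icc.2 hs))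
  have hfs : IntervalIntegrable (fun u => f (s - u)) volume 0 s :=
    intervalIntegrable_comp_sub_left_of_le
      (hf.mono_set (uIcc_subset_uIcc left_mem_uIcc (mem_uIcc_of_le hs hst))) hs le_rfl
  have hbound : ∀ᵐ u, u ∈ Ioc 0 s →
      ‖(f (t - u) - f (s - u)) * M u‖ ≤ (f (s - u) - f (t - u)) * K := by
    filter_upwards [Measure.ae_ne volume s] with u hus hu
    have hpos : 0 < s - u := sub_pos.2 (lt_of_le_of_ne hu.2 hus)
    have hle : f (t - u) ≤ f (s - u) :=
      hmono hpos (show (0 : ℝ) < t - u by linarith) (by linarith)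
    rw [Real.norm_eq_abs, abs_mul, abs_of_nonpos (sub_nonpos.2 hle), neg_sub]
    exact mul_le_mul_of_nonneg_left (hK u (Ioc_subset_Icc_self hu)) (sub_nonneg.2 hle)
  calc |∫ u in (0 : ℝ)..s, (f (t - u) - f (s - u)) * M u|
      ≤ ∫ u in (0 : ℝ)..s, (f (s - u) - f (t - u)) * K :=
        norm_integral_le_of_norm_le hs hbound
          ((hfs.sub (intervalIntegrable_comp_sub_left_of_le hf hs hst)).mul_const K)
    _ = (∫ u in (0 : ℝ)..s, (f (s - u) - f (t - u))) * K :=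
        intervalIntegral.integral_mul_const K _
    _ ≤ (∫ u in (0 : ℝ)..(t - s), f u) * K :=
        mul_le_mul_of_nonneg_right (integral_comp_sub_left_sub_le hf0 hf hs hst) hK0

end

theorem stmt15_general (f M : ℝ → ℝ) (δ K : ℝ)
    (hf0 : ∀ x : ℝ, 0 < x → 0 ≤ f x)
    (hfint : IntegrableOn f (Set.Ioi 0))
    (hmono : AntitoneOn f (Set.Ioi 0))
    (hM : ContinuousOn M (Set.Icc 0 1))
    (hK : ∀ u ∈ Set.Icc (0 : ℝ) 1, |M u| ≤ K) :
    ∀ s t : ℝ, 0 ≤ s → s ≤ t → t ≤ 1 → t - s ≤ δ →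
      |(∫ u in (0 : ℝ)..t, f (t - u) * M u) - ∫ u in (0 : ℝ)..s, f (s - u) * M u|
        ≤ 2 * (∫ u in (0 : ℝ)..δ, f u) * K := by
  intro s t hs hst ht1 hts
  have ht : 0 ≤ t := hs.trans hst
  have hfi : ∀ b, 0 ≤ b → IntervalIntegrable f volume 0 b := fun b hb =>
    (intervalIntegrable_iff_integrableOn_Ioc_of_le hb).2 (hfint.mono_set Set.Ioc_subset_Ioi_self)
  have hMi : ∀ b, 0 ≤ b → b ≤ 1 → IntervalIntegrable (fun u => f (b - u) * M u) volume 0 b :=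
    fun b hb hb1 => intervalIntegrable_comp_sub_left_mul (hfi b hb) hb
      (hM.mono (Set.uIcc_subset_Icc (Set.left_mem_Icc.2 zero_le_one) ⟨hb, hb1⟩))
  have hK0 : 0 ≤ K := (abs_nonneg _).trans (hK 0 (Set.left_mem_Icc.2 zero_le_one))
  have hwindow : ∫ u in (0 : ℝ)..(t - s), f u ≤ ∫ u in (0 : ℝ)..δ, f u :=
    intervalIntegral.integral_mono_interval le_rfl (sub_nonneg.2 hst) hts
      ((ae_restrict_mem measurableSet_Ioc).mono fun x hx => hf0 x hx.1) (hfi δ (by linarith))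
  rw [integral_comp_sub_left_mul_sub_eq (hMi t ht ht1) (hMi s hs (hst.trans ht1)) hs hst]
  calc _ ≤ |∫ u in s..t, f (t - u) * M u|
        + |∫ u in (0 : ℝ)..s, (f (t - u) - f (s - u)) * M u| := abs_add_le _ _
    _ ≤ (∫ u in (0 : ℝ)..(t - s), f u) * K + (∫ u in (0 : ℝ)..(t - s), f u) * K :=
        add_le_add
          (abs_integral_comp_sub_left_mul_le hf0 (hfi _ (sub_nonneg.2 hst))
            (fun u hu => hK u ⟨hs.trans hu.1, hu.2.trans ht1⟩) hst)
          (abs_integral_comp_sub_left_sub_mul_le hf0 hmono (hfi t ht)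
            (fun u hu => hK u ⟨hu.1, hu.2.trans (hst.trans ht1)⟩) hs hst)
    _ ≤ 2 * (∫ u in (0 : ℝ)..δ, f u) * K := by linarith [mul_le_mul_of_nonneg_right hwindow hK0]

/-- Modulus-of-continuity estimate: for a nonincreasing kernel `f ≥ 0` with
`∫_0^∞ f ≤ 1`, a continuous `M` on `[0,1]` bounded by `K`, and
`Λ(t) = ∫_0^t f(t-s) M(s) ds`, one has for `0 ≤ s ≤ t ≤ 1` with `t - s ≤ δ`:
`|Λ(t) - Λ(s)| ≤ 2 (∫_0^δ f) · K`. -/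
theorem stmt15 (f M : ℝ → ℝ) (δ K : ℝ)
    (hf0 : ∀ x : ℝ, 0 < x → 0 ≤ f x)
    (hfint : IntegrableOn f (Set.Ioi 0))
    (hf1 : (∫ x in Set.Ioi (0 : ℝ), f x) ≤ 1)
    (hmono : AntitoneOn f (Set.Ioi 0))
    (hM : ContinuousOn M (Set.Icc 0 1))
    (hK : ∀ u ∈ Set.Icc (0 : ℝ) 1, |M u| ≤ K)
    (hδ : 0 < δ) :
    ∀ s t : ℝ, 0 ≤ s → s ≤ t → t ≤ 1 → t - s ≤ δ →
      |(∫ u in (0 : ℝ)..t, f (t - u) * M u) - ∫ u in (0 : ℝ)..s, f (s - u) * M u|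
        ≤ 2 * (∫ u in (0 : ℝ)..δ, f u) * K :=
  stmt15_general f M δ K hf0 hfint hmono hM hK
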